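/- arXiv:1301.4623 — 3 statements merged into one kernel-verified Lean document; each statement's English description precedes it below -/
import Mathlib

section
/- Let n = 3r + q with r ≥ 1 and 0 ≤ q ≤ 2, and let G be a connected graph on n vertices with κ̄₃(G) = 1. Then the number of edges of G satisfies e(G) ≤ (4n − 3 − q)/3. -/
open SimpleGraph

/-- An `S`-Steiner tree in `G`: a subgraph that is a tree and contains `S`. -/
def SimpleGraph.IsSteinerTree {V : Type*} (G : SimpleGraph V) (S : Set V)
    (T : G.Subgraph) : Prop :=
  S ⊆ T.verts ∧ T.coe.IsTree

/-- `κ(S)`: the maximum number of pairwise internally disjoint `S`-Steiner trees in `G`. -/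
noncomputable def SimpleGraph.steinerConn {V : Type*} (G : SimpleGraph V) (S : Set V) : ℕ :=
  sSup {n : ℕ | ∃ f : Fin n → G.Subgraph,
    (∀ i, G.IsSteinerTree S (f i)) ∧
    ∀ i j, i ≠ j →
      (f i).edgeSet ∩ (f j).edgeSet = ∅ ∧ (f i).verts ∩ (f j).verts = S}

/-- `κ̄ₖ(G) = max {κ(S) : S ⊆ V(G), |S| = k}`, the maximal generalized local connectivity. -/
noncomputable def SimpleGraph.kappaBar {V : Type*} (G : SimpleGraph V) (k : ℕ) : ℕ :=
  sSup {m : ℕ | ∃ S : Finset V, S.card = k ∧ G.steinerConn ↑S = m}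

/-- `p` is an ear of the cycle `c` in `G`: a nontrivial path (whose two endpoints may
coincide) meeting `c` exactly in its endpoints. -/
def SimpleGraph.IsEar {V : Type*} (G : SimpleGraph V) {x u v : V}
    (c : G.Walk x x) (p : G.Walk u v) : Prop :=
  0 < p.length ∧ u ∈ c.support ∧ v ∈ c.support ∧
  p.support.tail.Nodup ∧ (u = v ∨ u ∉ p.support.tail) ∧
  ∀ w ∈ p.support, w ∈ c.support → w = u ∨ w = v

/-!
Two paths through three common vertices, meeting only there and sharing no edge, are two
internally disjoint Steiner trees, so they force `κ̄₃(G) ≥ 2`. Such a pair exists as soon as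
two vertices of a cycle `C` are joined by a path sharing no edge and no other vertex with
`C`, or two cycles meet in exactly one vertex. Hence if `κ̄₃(G) = 1`, deleting the edges of
a cycle of length `ℓ ≥ 3` leaves its `ℓ` vertices pairwise disconnected and on no cycle.
Deleting cycles and bridges one at a time then gives `3 (e + c) ≤ 3 n + m`, where `c` counts
the components and `m` the vertices lying on cycles; with `c ≥ 1` and `m ≤ n` this is the
bound.
-/

lemma Function.Surjective.card_add_ncard_le {α β : Type*} [Finite α] {f : α → β}
    (hf : f.Surjective) {s : Set α} (hs : ∀ x ∈ s, ∀ y ∈ s, f x = f y) :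
    Nat.card β + s.ncard ≤ Nat.card α + 1 := by
  rcases s.eq_empty_or_nonempty with rfl | ⟨x₀, hx₀⟩
  · simpa using (Nat.card_le_card_of_surjective f hf).trans (Nat.le_succ _)
  have himage : f '' insert x₀ sᶜ = Set.univ := by
    refine Set.eq_univ_of_forall fun b ↦ ?_
    obtain ⟨x, rfl⟩ := hf b
    by_cases hx : x ∈ s
    · exact ⟨x₀, Set.mem_insert _ _, hs x₀ hx₀ x hx⟩
    · exact ⟨x, Set.mem_insert_of_mem _ hx, rfl⟩
  calc Nat.card β + s.ncard = (f '' insert x₀ sᶜ).ncard + s.ncard := by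
        rw [himage, Set.ncard_univ]
    _ ≤ sᶜ.ncard + 1 + s.ncard := by
        grw [Set.ncard_image_le, Set.ncard_insert_le]
    _ = Nat.card α + 1 := by
        rw [← Set.ncard_add_ncard_compl s]
        ring

namespace SimpleGraph

variable {V : Type*} {G : SimpleGraph V}

namespace Walk

lemma IsTrail.ncard_edgeSet {u v : V} {p : G.Walk u v} (hp : p.IsTrail) :
    p.edgeSet.ncard = p.length := by
  classical
  rw [← coe_edges_toFinset, Set.ncard_coe_finset, List.toFinset_card_of_nodup hp.edges_nodup,
    length_edges]

lemma IsPath.ncard_verts_toSubgraph {u v : V} {p : G.Walk u v} (hp : p.IsPath) :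
    p.toSubgraph.verts.ncard = p.length + 1 := by
  classical
  rw [verts_toSubgraph, ← List.coe_toFinset, Set.ncard_coe_finset,
    List.toFinset_card_of_nodup hp.support_nodup, length_support]

lemma IsCycle.ncard_verts_toSubgraph {u : V} {c : G.Walk u u} (hc : c.IsCycle) :
    c.toSubgraph.verts.ncard = c.length := by
  classical
  have : c.toSubgraph.verts = {w | w ∈ c.support.tail} := by
    ext w
    rw [verts_toSubgraph, Set.mem_ofPred_eq, Set.mem_ofPred_eq, mem_support_iff,
      or_iff_right_iff_imp]
    rintro rfl
    exact end_mem_tail_support hc.not_nil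
  rw [this, ← List.coe_toFinset, Set.ncard_coe_finset,
    List.toFinset_card_of_nodup hc.support_nodup, List.length_tail, length_support,
    Nat.add_sub_cancel]

lemma IsPath.isTree_coe_toSubgraph {u v : V} {p : G.Walk u v} (hp : p.IsPath) :
    p.toSubgraph.coe.IsTree := by
  have : Finite p.toSubgraph.verts := by rw [verts_toSubgraph]; exact List.finite_toSet _
  refine isTree_iff_connected_and_card.mpr ⟨p.toSubgraph_connected.coe, ?_⟩
  rw [Nat.card_coe_set_eq, Nat.card_coe_set_eq, hp.ncard_verts_toSubgraph,
    ← Set.ncard_image_of_injective _ (Sym2.map.injective Subtype.val_injective),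
    Subgraph.image_coe_edgeSet_coe, edgeSet_toSubgraph, hp.isTrail.ncard_edgeSet]

lemma IsPath.append {u v w : V} {p : G.Walk u v} {q : G.Walk v w} (hp : p.IsPath)
    (hq : q.IsPath) (h : ∀ x ∈ p.support, x ∈ q.support → x = v) : (p.append q).IsPath := by
  rw [isPath_def, support_append]
  have hv : v ∉ q.support.tail := by
    have := hq.support_nodup
    rw [← q.cons_tail_support, List.nodup_cons] at this
    exact this.1
  exact hp.support_nodup.append hq.support_nodup.tail fun x hxp hxq ↦
    hv (h x hxp (List.mem_of_mem_tail hxq) ▸ hxq)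

lemma notMem_of_mem_edges_deleteEdges {s : Set (Sym2 V)} {u v : V} {e : Sym2 V}
    (p : (G.deleteEdges s).Walk u v) (he : e ∈ p.edges) : e ∉ s :=
  (edgeSet_deleteEdges s ▸ p.edges_subset_edgeSet he : e ∈ G.edgeSet \ s).2

end Walk

lemma IsSteinerTree.edgeSet_nonempty {S : Set V} {T : G.Subgraph} (hT : G.IsSteinerTree S T)
    (hS : S.Nontrivial) : T.edgeSet.Nonempty := by
  obtain ⟨a, ha, b, hb, hab⟩ := hS
  obtain ⟨p⟩ := hT.2.connected.preconnected ⟨a, hT.1 ha⟩ ⟨b, hT.1 hb⟩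
  exact ⟨s(a, p.snd), p.adj_snd (Walk.not_nil_of_ne fun h ↦ hab congr($h.1))⟩

lemma le_card_sym2_of_isSteinerTree [Finite V] {S : Set V} (hS : S.Nontrivial) {n : ℕ}
    {T : Fin n → G.Subgraph} (hT : ∀ i, G.IsSteinerTree S (T i))
    (hdisj : ∀ i j, i ≠ j → (T i).edgeSet ∩ (T j).edgeSet = ∅) : n ≤ Nat.card (Sym2 V) := by
  choose e he using fun i ↦ (hT i).edgeSet_nonempty hS
  have he_inj : Function.Injective e := fun i j hij ↦ by
    by_contra hne
    exact (hdisj i j hne).subset ⟨he i, hij ▸ he j⟩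
  simpa using Nat.card_le_card_of_injective e he_inj

lemma steinerConn_le_card_sym2 [Finite V] {S : Set V} (hS : S.Nontrivial) :
    G.steinerConn S ≤ Nat.card (Sym2 V) :=
  csSup_le' fun _ ⟨_, hT, hdisj⟩ ↦ le_card_sym2_of_isSteinerTree hS hT fun i j h ↦ (hdisj i j h).1

lemma le_steinerConn [Finite V] {S : Set V} (hS : S.Nontrivial) {n : ℕ}
    (T : Fin n → G.Subgraph) (hT : ∀ i, G.IsSteinerTree S (T i))
    (hdisj : ∀ i j, i ≠ j → (T i).edgeSet ∩ (T j).edgeSet = ∅ ∧ (T i).verts ∩ (T j).verts = S) :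
    n ≤ G.steinerConn S :=
  le_csSup ⟨_, fun _ ⟨_, hT, hdisj⟩ ↦
    le_card_sym2_of_isSteinerTree hS hT fun i j h ↦ (hdisj i j h).1⟩ ⟨T, hT, hdisj⟩

lemma steinerConn_le_kappaBar [Finite V] (S : Finset V) (hS : 2 ≤ S.card) :
    G.steinerConn S ≤ G.kappaBar S.card :=
  le_csSup ⟨_, fun _ ⟨_, hS', hm⟩ ↦ hm ▸ steinerConn_le_card_sym2
    (Finset.one_lt_card_iff_nontrivial.mp (by omega))⟩ ⟨S, rfl, rfl⟩

/-- A witness of `2 ≤ G.kappaBar 3` which, being made of walks, visibly passes to supergraphs. -/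
def HasSteinerPathPair (G : SimpleGraph V) : Prop :=
  ∃ (S : Finset V) (a b a' b' : V) (p : G.Walk a b) (q : G.Walk a' b'), S.card = 3 ∧
    p.IsPath ∧ q.IsPath ∧ p.toSubgraph.verts ∩ q.toSubgraph.verts = S ∧
    p.toSubgraph.edgeSet ∩ q.toSubgraph.edgeSet = ∅

lemma HasSteinerPathPair.mono {G' : SimpleGraph V} (hle : G ≤ G') (h : G.HasSteinerPathPair) :
    G'.HasSteinerPathPair := by
  obtain ⟨S, a, b, a', b', p, q, hS, hp, hq, hV, hE⟩ := h
  refine ⟨S, a, b, a', b', p.mapLe hle, q.mapLe hle, hS, hp.mapLe hle, hq.mapLe hle, ?_, ?_⟩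
  · simpa [Walk.support_mapLe_eq_support] using hV
  · simpa [Walk.edgeSet_mapLe_eq_edgeSet] using hE

lemma HasSteinerPathPair.two_le_kappaBar [Finite V] (h : G.HasSteinerPathPair) :
    2 ≤ G.kappaBar 3 := by
  obtain ⟨S, a, b, a', b', p, q, hS, hp, hq, hV, hE⟩ := h
  have hsub : ↑S ⊆ p.toSubgraph.verts ∩ q.toSubgraph.verts := hV.ge
  calc 2 ≤ G.steinerConn S :=
        le_steinerConn (Finset.one_lt_card_iff_nontrivial.mp (by omega))
          ![p.toSubgraph, q.toSubgraph]
          (Fin.forall_fin_two.mpr ⟨⟨hsub.trans Set.inter_subset_left, hp.isTree_coe_toSubgraph⟩,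
            ⟨hsub.trans Set.inter_subset_right, hq.isTree_coe_toSubgraph⟩⟩)
          (by
            intro i j hij
            fin_cases i <;> fin_cases j <;> simp_all [Set.inter_comm])
    _ ≤ G.kappaBar 3 := hS ▸ steinerConn_le_kappaBar S (by omega)

lemma hasSteinerPathPair_of_isCycle_of_isCycle {u : V} {c d : G.Walk u u} (hc : c.IsCycle)
    (hd : d.IsCycle) (hV : ∀ w ∈ c.support, w ∈ d.support → w = u)
    (hE : ∀ e ∈ c.edges, e ∉ d.edges) : G.HasSteinerPathPair := by
  classical
  cases c with
  | nil => exact absurd hc Walk.not_isCycle_nil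
  | @cons _ a _ hua t =>
  cases d with
  | nil => exact absurd hd Walk.not_isCycle_nil
  | @cons _ b _ hub t' =>
  rw [Walk.cons_isCycle_iff] at hc hd
  have hau : a ≠ u := hua.ne.symm
  have hbu : b ≠ u := hub.ne.symm
  have hab : a ≠ b := fun h ↦ hau (hV a (by simp) (by simp [h]))
  -- `S = {a, u, b}`, joined by the path `a u b` and by the rest of both cycles
  refine ⟨{a, u, b}, a, b, a, b, .cons hua.symm (.cons hub .nil), t.append t'.reverse, ?_, ?_,
    hc.1.append hd.1.reverse fun x hx hx' ↦ hV x (by simp [hx]) (by simp_all), ?_, ?_⟩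
  · simp [hau, hab, hbu.symm]
  · simp [Walk.cons_isPath_iff, hau, hab, hbu.symm]
  · ext x
    simp only [Walk.verts_toSubgraph, Walk.support_cons, Walk.support_nil,
      Walk.mem_support_append_iff, Walk.support_reverse, Set.mem_inter_iff, Set.mem_ofPred_eq,
      List.mem_cons, List.mem_reverse, Finset.coe_insert, Finset.coe_singleton,
      Set.mem_insert_iff, Set.mem_singleton_iff]
    refine ⟨by tauto, ?_⟩
    rintro (rfl | rfl | rfl) <;> simp
  · ext e
    simp only [Walk.edgeSet_toSubgraph, Walk.edgeSet_cons, Walk.edgeSet_append,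
      Walk.edgeSet_reverse, Walk.edgeSet_nil, insert_empty_eq, Set.mem_inter_iff,
      Set.mem_insert_iff, Set.mem_singleton_iff, Set.mem_union, Walk.mem_edgeSet,
      Set.mem_empty_iff_false, iff_false, not_and, not_or]
    rintro (rfl | rfl)
    · exact ⟨by rw [Sym2.eq_swap]; exact hc.2,
        fun h' ↦ hE s(a, u) (by simp [Sym2.eq_swap]) (by simp [h'])⟩
    · exact ⟨fun h' ↦ hE s(u, b) (by simp [h']) (by simp), hd.2⟩

lemma hasSteinerPathPair_of_isCycle_of_isPath_of_ne_snd {u v : V} {c : G.Walk u u} (hc : c.IsCycle)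
    {p : G.Walk u v} (hp : p.IsPath) (huv : u ≠ v) (hv : v ∈ c.support) (hvc : v ≠ c.snd)
    (hV : ∀ w ∈ p.support, w ∈ c.support → w = u ∨ w = v) (hE : ∀ e ∈ p.edges, e ∉ c.edges) :
    G.HasSteinerPathPair := by
  classical
  cases c with
  | nil => exact absurd hc Walk.not_isCycle_nil
  | @cons _ a _ hua t =>
  rw [Walk.cons_isCycle_iff] at hc
  rw [Walk.snd_cons] at hvc
  have hau : a ≠ u := hua.ne.symm
  have hap : a ∉ p.support := fun ha ↦ (hV a ha (by simp)).elim hau hvc.symm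
  -- `S = {a, u, v}`, joined by the edge `a u` followed by `p`, and by the rest of the cycle
  refine ⟨{a, u, v}, a, v, a, u, .cons hua.symm p, t, ?_, hp.cons hap, hc.1, ?_, ?_⟩
  · simp [hau, hvc.symm, huv]
  · ext x
    simp only [Walk.verts_toSubgraph, Walk.support_cons, Set.mem_inter_iff, Set.mem_ofPred_eq,
      List.mem_cons, Finset.coe_insert, Finset.coe_singleton, Set.mem_insert_iff,
      Set.mem_singleton_iff]
    constructor
    · rintro ⟨rfl | hxp, hxt⟩
      · exact Or.inl rfl
      · exact Or.inr (hV x hxp (by simp [hxt]))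
    · rintro (rfl | rfl | rfl)
      · exact ⟨Or.inl rfl, t.start_mem_support⟩
      · exact ⟨Or.inr p.start_mem_support, t.end_mem_support⟩
      · exact ⟨Or.inr p.end_mem_support, (List.mem_cons.mp hv).resolve_left huv.symm⟩
  · ext e
    simp only [Walk.edgeSet_toSubgraph, Walk.edgeSet_cons, Set.mem_inter_iff, Set.mem_insert_iff,
      Walk.mem_edgeSet, Set.mem_empty_iff_false, iff_false, not_and]
    rintro (rfl | hep)
    · rw [Sym2.eq_swap]
      exact hc.2
    · exact fun het ↦ hE e hep (by simp [het])

lemma hasSteinerPathPair_of_isCycle_of_isPath {x u v : V} {c : G.Walk x x} (hc : c.IsCycle)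
    {p : G.Walk u v} (hp : p.IsPath) (huv : u ≠ v) (hu : u ∈ c.support) (hv : v ∈ c.support)
    (hV : ∀ w ∈ p.support, w ∈ c.support → w = u ∨ w = v) (hE : ∀ e ∈ p.edges, e ∉ c.edges) :
    G.HasSteinerPathPair := by
  classical
  have hc' : (c.rotate u hu).IsCycle := hc.rotate hu
  have hE' : ∀ e ∈ p.edges, e ∉ (c.rotate u hu).edges := fun e he h ↦
    hE e he ((c.rotate_edges u hu).mem_iff.mp h)
  by_cases hvs : v = (c.rotate u hu).snd
  · refine hasSteinerPathPair_of_isCycle_of_isPath_of_ne_snd hc'.reverse hp huv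
      (by simpa using hv) ?_ (by simpa using hV) (by simpa using hE')
    rw [Walk.snd_reverse, hvs]
    exact hc'.snd_ne_penultimate
  · exact hasSteinerPathPair_of_isCycle_of_isPath_of_ne_snd hc' hp huv (by simpa using hv) hvs
      (by simpa using hV) hE'

lemma Walk.IsCycle.not_reachable_deleteEdges (hG : ¬ G.HasSteinerPathPair) {x : V}
    {c : G.Walk x x} (hc : c.IsCycle) {u v : V} (hu : u ∈ c.support) (hv : v ∈ c.support)
    (huv : u ≠ v) : ¬ (G.deleteEdges c.edgeSet).Reachable u v := by
  classical
  rintro ⟨p⟩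
  induction hn : p.length using Nat.strong_induction_on generalizing v p with
  | _ n ih =>
  by_cases hz : ∃ z ∈ p.support, z ∈ c.support ∧ z ≠ u ∧ z ≠ v
  · obtain ⟨z, hzp, hzc, hzu, hzv⟩ := hz
    exact ih _ (hn ▸ Walk.length_takeUntil_lt_length hzp hzv) hzc hzu.symm _ rfl
  · push Not at hz
    refine hG (hasSteinerPathPair_of_isCycle_of_isPath hc (p := p.bypass.mapLe (deleteEdges_le _))
      (p.bypass_isPath.mapLe _) huv hu hv (fun w hw hwc ↦ ?_)
      (by simpa using fun e he ↦ p.bypass.notMem_of_mem_edges_deleteEdges he))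
    rw [Walk.support_mapLe_eq_support] at hw
    exact or_iff_not_imp_left.mpr (hz w (p.support_bypass_subset_support hw) hwc)

def cycleVerts (G : SimpleGraph V) : Set V := {v | ∃ c : G.Walk v v, c.IsCycle}

lemma cycleVerts_mono {G' : SimpleGraph V} (h : G ≤ G') : G.cycleVerts ⊆ G'.cycleVerts :=
  fun _ ⟨c, hc⟩ ↦ ⟨c.mapLe h, hc.mapLe h⟩

lemma Walk.IsCycle.verts_toSubgraph_subset_cycleVerts {x : V} {c : G.Walk x x} (hc : c.IsCycle) :
    c.toSubgraph.verts ⊆ G.cycleVerts := by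
  classical
  intro v hv
  rw [Walk.mem_verts_toSubgraph] at hv
  exact ⟨c.rotate v hv, hc.rotate hv⟩

lemma Walk.IsCycle.notMem_cycleVerts_deleteEdges (hG : ¬ G.HasSteinerPathPair) {x : V}
    {c : G.Walk x x} (hc : c.IsCycle) {v : V} (hv : v ∈ c.support) :
    v ∉ (G.deleteEdges c.edgeSet).cycleVerts := by
  classical
  rintro ⟨d, hd⟩
  by_cases hw : ∃ w ∈ d.support, w ∈ c.support ∧ w ≠ v
  · obtain ⟨w, hwd, hwc, hwv⟩ := hw
    exact hc.not_reachable_deleteEdges hG hv hwc hwv.symm ⟨d.takeUntil w hwd⟩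
  · push Not at hw
    refine hG (hasSteinerPathPair_of_isCycle_of_isCycle (hc.rotate hv) (hd.mapLe (deleteEdges_le _))
      (fun w hw' hwd ↦ ?_) (fun e he hed ↦ ?_))
    · exact hw w (by simpa using hwd) (by simpa using hw')
    · exact d.notMem_of_mem_edges_deleteEdges (by simpa using hed)
        ((c.rotate_edges v hv).mem_iff.mp he)

lemma card_connectedComponent_add_ncard_le [Finite V] {G' : SimpleGraph V} (h : G' ≤ G)
    {W : Set V} (hW : ∀ a ∈ W, ∀ b ∈ W, G.Reachable a b)
    (hW' : W.Pairwise fun a b ↦ ¬ G'.Reachable a b) :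
    Nat.card G.ConnectedComponent + W.ncard ≤ Nat.card G'.ConnectedComponent + 1 := by
  have hinj : W.InjOn G'.connectedComponentMk := fun a ha b hb hab ↦
    by_contra fun hne ↦ hW' ha hb hne (ConnectedComponent.exact hab)
  rw [← hinj.ncard_image]
  refine (ConnectedComponent.surjective_map_ofLE h).card_add_ncard_le ?_
  rintro _ ⟨a, ha, rfl⟩ _ ⟨b, hb, rfl⟩
  exact ConnectedComponent.sound (hW a ha b hb)

lemma deleteEdges_lt {s : Set (Sym2 V)} {e : Sym2 V} (he : e ∈ G.edgeSet) (hes : e ∈ s) :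
    G.deleteEdges s < G :=
  (deleteEdges_le s).lt_of_ne fun h ↦ Set.disjoint_left.mp (deleteEdges_eq_self.mp h) he hes

lemma ncard_edgeSet_deleteEdges_add [Finite V] {s : Set (Sym2 V)} (hs : s ⊆ G.edgeSet) :
    (G.deleteEdges s).edgeSet.ncard + s.ncard = G.edgeSet.ncard := by
  rw [edgeSet_deleteEdges, Set.ncard_sdiff_add_ncard_of_subset hs]

lemma Walk.IsCycle.card_connectedComponent_deleteEdges [Finite V] (hG : ¬ G.HasSteinerPathPair)
    {x : V} {c : G.Walk x x} (hc : c.IsCycle) :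
    Nat.card G.ConnectedComponent + c.length ≤
      Nat.card (G.deleteEdges c.edgeSet).ConnectedComponent + 1 := by
  rw [← hc.ncard_verts_toSubgraph]
  refine card_connectedComponent_add_ncard_le (deleteEdges_le _) (fun a ha b hb ↦ ?_)
    fun a ha b hb hab ↦ hc.not_reachable_deleteEdges hG (by simpa using ha) (by simpa using hb) hab
  classical
  rw [Walk.mem_verts_toSubgraph] at ha hb
  exact (c.takeUntil a ha).reachable.symm.trans (c.takeUntil b hb).reachable

lemma Walk.IsCycle.ncard_cycleVerts_deleteEdges [Finite V] (hG : ¬ G.HasSteinerPathPair)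
    {x : V} {c : G.Walk x x} (hc : c.IsCycle) :
    (G.deleteEdges c.edgeSet).cycleVerts.ncard + c.length ≤ G.cycleVerts.ncard := by
  have hsub : (G.deleteEdges c.edgeSet).cycleVerts ⊆ G.cycleVerts \ c.toSubgraph.verts :=
    fun v hv ↦ ⟨cycleVerts_mono (deleteEdges_le _) hv,
      fun hvc ↦ hc.notMem_cycleVerts_deleteEdges hG (by simpa using hvc) hv⟩
  rw [← hc.ncard_verts_toSubgraph,
    ← Set.ncard_sdiff_add_ncard_of_subset hc.verts_toSubgraph_subset_cycleVerts]
  grw [Set.ncard_le_ncard hsub]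

theorem three_mul_ncard_edgeSet_add_card_connectedComponent_le [Finite V]
    (hG : ¬ G.HasSteinerPathPair) :
    3 * (G.edgeSet.ncard + Nat.card G.ConnectedComponent) ≤
      3 * Nat.card V + G.cycleVerts.ncard := by
  induction G using WellFoundedLT.induction with
  | _ G ih =>
  have ih' (s : Set (Sym2 V)) (hs : G.deleteEdges s < G) := ih _ hs fun h ↦
    hG (h.mono (deleteEdges_le s))
  rcases G.edgeSet.eq_empty_or_nonempty with hE | ⟨e, he⟩
  · have := Nat.card_le_card_of_surjective G.connectedComponentMk fun C ↦ C.exists_rep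
    rw [hE, Set.ncard_empty]
    omega
  induction e using Sym2.ind with
  | _ a b =>
  by_cases hr : (G.deleteEdges {s(a, b)}).Reachable a b
  · obtain ⟨x, c, hc, hab⟩ :=
      (adj_and_reachable_delete_edges_iff_exists_cycle (v := a) (w := b)).mp ⟨he, hr⟩
    have hIH := ih' _ (deleteEdges_lt he (Walk.mem_edgeSet.mpr hab))
    have hedges := ncard_edgeSet_deleteEdges_add (s := c.edgeSet) fun _ he' ↦
      c.edges_subset_edgeSet he'
    rw [hc.isTrail.ncard_edgeSet] at hedges
    have hcomp := hc.card_connectedComponent_deleteEdges hG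
    have hcyc := hc.ncard_cycleVerts_deleteEdges hG
    have hlen := hc.three_le_length
    omega
  · have hIH := ih' _ (deleteEdges_lt he (Set.mem_singleton _))
    have hedges := ncard_edgeSet_deleteEdges_add (Set.singleton_subset_iff.mpr he)
    have hcomp := card_connectedComponent_add_ncard_le (G := G) (deleteEdges_le _)
      (W := {a, b}) (by simp [he.reachable, he.reachable.symm])
      (Set.pairwise_pair.mpr fun _ ↦ ⟨hr, fun h ↦ hr h.symm⟩)
    have hcyc := Set.ncard_le_ncard (cycleVerts_mono (G.deleteEdges_le {s(a, b)}))
    rw [Set.ncard_singleton] at hedges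
    rw [Set.ncard_pair he.ne] at hcomp
    omega

end SimpleGraph

theorem stmt_3_general {V : Type*} [Fintype V] (G : SimpleGraph V) (r q : ℕ)
    (hq : q ≤ 2) (hcard : Fintype.card V = 3 * r + q) (hG : G.Connected)
    (hk : G.kappaBar 3 = 1) :
    G.edgeSet.ncard ≤ (4 * Fintype.card V - 3 - q) / 3 := by
  have hpair : ¬ G.HasSteinerPathPair := fun h ↦ by
    have := h.two_le_kappaBar
    omega
  have hbound := three_mul_ncard_edgeSet_add_card_connectedComponent_le hpair
  have : Nonempty V := hG.nonempty
  have hcomp : 0 < Nat.card G.ConnectedComponent := Nat.card_pos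
  have hcyc := G.cycleVerts.ncard_le_card
  rw [Nat.card_eq_fintype_card (α := V)] at hbound hcyc
  omega

/-- If `n = 3r + q` with `r ≥ 1`, `0 ≤ q ≤ 2`, and `G` is a connected graph on
`n` vertices with `κ̄₃(G) = 1`, then `e(G) ≤ (4n - 3 - q)/3`. -/
theorem stmt_3 {V : Type*} [Fintype V] (G : SimpleGraph V) (r q : ℕ) (hr : 1 ≤ r)
    (hq : q ≤ 2) (hcard : Fintype.card V = 3 * r + q) (hG : G.Connected)
    (hk : G.kappaBar 3 = 1) :
    G.edgeSet.ncard ≤ (4 * Fintype.card V - 3 - q) / 3 :=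
  stmt_3_general G r q hq hcard hG hk
end

section
/- Let G be a connected graph with 5 vertices and exactly 6 edges. Then κ̄₄(G) = 1. -/
open SimpleGraph

/-!
A connected graph always has a spanning tree, so `κ(S) ≥ 1`. Two internally disjoint
`S`-Steiner trees have `|V(T₁)| + |V(T₂)| - 2 ≥ 2|S| - 2` edges together, with equality only
when both span exactly `S`; in that case an edge of the connected graph `G` at a vertex outside
`S` lies in neither tree. Hence two such trees force `|E(G)| ≥ 2|S| - 1`, which for `|S| = 4`
exceeds the six edges available.
-/

namespace SimpleGraph

variable {V : Type*} {G : SimpleGraph V}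

lemma IsTree.ncard_edgeSet_add_one [Finite V] (hG : G.IsTree) :
    G.edgeSet.ncard + 1 = Nat.card V := by
  classical
  have := Fintype.ofFinite V
  rw [Set.ncard_eq_toFinset_card', Nat.card_eq_fintype_card]
  exact hG.card_edgeFinset

lemma Subgraph.ncard_edgeSet_add_one_of_isTree [Finite V] {T : G.Subgraph} (hT : T.coe.IsTree) :
    T.edgeSet.ncard + 1 = T.verts.ncard := by
  rw [← T.image_coe_edgeSet_coe, Set.ncard_image_of_injective _
    (Sym2.map.injective Subtype.coe_injective), ← Nat.card_coe_set_eq]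
  exact hT.ncard_edgeSet_add_one

lemma Connected.exists_isSteinerTree (hG : G.Connected) (S : Set V) :
    ∃ T : G.Subgraph, G.IsSteinerTree S T := by
  obtain ⟨F, hFG, hF⟩ := hG.exists_isTree_le
  refine ⟨G.toSubgraph F hFG, by simp [toSubgraph], ?_⟩
  exact (Subgraph.spanningCoeEquivCoeOfSpanning _ (toSubgraph.isSpanning F hFG)).isTree_iff.mp hF

theorem two_mul_ncard_le_ncard_edgeSet_add_one [Finite V] (hG : G.Connected) {S : Set V}
    (hS : S ≠ Set.univ) {T₁ T₂ : G.Subgraph} (h₁ : G.IsSteinerTree S T₁)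
    (h₂ : G.IsSteinerTree S T₂) (hE : T₁.edgeSet ∩ T₂.edgeSet = ∅)
    (hV : T₁.verts ∩ T₂.verts = S) :
    2 * S.ncard ≤ G.edgeSet.ncard + 1 := by
  have hE₁ := Subgraph.ncard_edgeSet_add_one_of_isTree h₁.2
  have hE₂ := Subgraph.ncard_edgeSet_add_one_of_isTree h₂.2
  have hVsum : (T₁.verts ∪ T₂.verts).ncard + S.ncard = T₁.verts.ncard + T₂.verts.ncard := by
    rw [← hV, Set.ncard_union_add_ncard_inter _ _ (Set.toFinite _) (Set.toFinite _)]
  have hEsum : (T₁.edgeSet ∪ T₂.edgeSet).ncard = T₁.edgeSet.ncard + T₂.edgeSet.ncard :=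
    Set.ncard_union_eq (Set.disjoint_iff_inter_eq_empty.mpr hE) (Set.toFinite _) (Set.toFinite _)
  have hsub : T₁.edgeSet ∪ T₂.edgeSet ⊆ G.edgeSet :=
    Set.union_subset T₁.edgeSet_subset T₂.edgeSet_subset
  have hSsub : S ⊆ T₁.verts ∪ T₂.verts := h₁.1.trans Set.subset_union_left
  by_cases hspan : T₁.verts ∪ T₂.verts = S
  · obtain ⟨w, -, hw⟩ := Set.exists_of_ssubset (Set.ssubset_univ_iff.mpr hS)
    obtain ⟨⟨v, hv⟩⟩ := h₁.2.connected.nonempty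
    have : Nontrivial V := ⟨⟨v, w, fun hvw => hw (hvw ▸ hspan ▸ Or.inl hv)⟩⟩
    obtain ⟨u, hwu⟩ := hG.preconnected.exists_adj_of_nontrivial w
    have hlt : (T₁.edgeSet ∪ T₂.edgeSet).ncard < G.edgeSet.ncard := by
      refine Set.ncard_lt_ncard (hsub.ssubset_of_not_subset fun h => hw ?_)
      obtain hT | hT := h (G.mem_edgeSet.mpr hwu)
      · exact hspan ▸ Or.inl (T₁.edge_vert hT)
      · exact hspan ▸ Or.inr (T₂.edge_vert hT)
    rw [hspan] at hVsum
    omega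
  · have hlt : S.ncard < (T₁.verts ∪ T₂.verts).ncard :=
      Set.ncard_lt_ncard (hSsub.ssubset_of_ne (Ne.symm hspan))
    have hle := Set.ncard_le_ncard hsub
    omega

theorem steinerConn_eq_one_of_ncard_edgeSet_lt [Finite V] (hG : G.Connected) {S : Set V}
    (hS : S ≠ Set.univ) (hE : G.edgeSet.ncard + 1 < 2 * S.ncard) : G.steinerConn S = 1 := by
  refine IsGreatest.csSup_eq ⟨?_, ?_⟩
  · obtain ⟨T, hT⟩ := hG.exists_isSteinerTree S
    exact ⟨fun _ => T, fun _ => hT, fun i j hij => absurd (Subsingleton.elim i j) hij⟩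
  · rintro n ⟨f, hf, hdisj⟩
    by_contra! hn
    obtain ⟨hE₀₁, hV₀₁⟩ := hdisj ⟨0, by omega⟩ ⟨1, hn⟩ (by simp [Fin.ext_iff])
    have := two_mul_ncard_le_ncard_edgeSet_add_one hG hS (hf _) (hf _) hE₀₁ hV₀₁
    omega

theorem kappaBar_eq_of_forall_steinerConn_eq [Fintype V] {k m : ℕ} (hk : k ≤ Fintype.card V)
    (h : ∀ S : Finset V, S.card = k → G.steinerConn S = m) : G.kappaBar k = m := by
  refine IsGreatest.csSup_eq ⟨?_, ?_⟩
  · obtain ⟨S, -, hS⟩ := Finset.exists_subset_card_eq (s := Finset.univ) hk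
    exact ⟨S, hS, h S hS⟩
  · rintro _ ⟨S, hS, rfl⟩
    exact (h S hS).le

end SimpleGraph

/-- A connected graph with 5 vertices and exactly 6 edges has `κ̄₄(G) = 1`. -/
theorem stmt_7 {V : Type*} [Fintype V] (G : SimpleGraph V) (hG : G.Connected)
    (hcard : Fintype.card V = 5) (he : G.edgeSet.ncard = 6) :
    G.kappaBar 4 = 1 := by
  refine G.kappaBar_eq_of_forall_steinerConn_eq (by omega) fun S hS => ?_
  have hS_ne : (S : Set V) ≠ Set.univ := by
    rw [Ne, Finset.coe_eq_univ]
    rintro rfl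
    rw [Finset.card_univ] at hS
    omega
  exact steinerConn_eq_one_of_ncard_edgeSet_lt hG hS_ne (by rw [Set.ncard_coe_finset]; omega)
end

section
/- Let G be the graph on the nine vertices u₁, u₂, u₃, v₁, w₁, v₂, w₂, v₃, w₃ whose edges are the triangle u₁u₂u₃ together with, for each i ∈ {1,2,3}, the triangle u_i v_i w_i (that is, edges u_i v_i, v_i w_i, w_i u_i). Then κ̄₅(G) = 1, even though G contains a cycle (namely u₁u₂u₃) having three ears. -/
open SimpleGraph

/-- The graph on the nine vertices `u₁ = 0, u₂ = 1, u₃ = 2, v₁ = 3, w₁ = 4, v₂ = 5,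
w₂ = 6, v₃ = 7, w₃ = 8` whose edges form the triangle `u₁u₂u₃` together with the triangles
`uᵢvᵢwᵢ` for `i = 1, 2, 3`. -/
def counterexampleGraph : SimpleGraph (Fin 9) :=
  SimpleGraph.fromEdgeSet
    {s(0, 1), s(1, 2), s(2, 0),
     s(0, 3), s(3, 4), s(4, 0),
     s(1, 5), s(5, 6), s(6, 1),
     s(2, 7), s(7, 8), s(8, 2)}

/-! Each `S`-Steiner tree for a five-element set `S` uses two of the three sides of some
triangle: of the central triangle `u₁u₂u₃` if `S` meets all three blocks `{uᵢ, vᵢ, wᵢ}`, and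
otherwise (five vertices in two blocks of three) of the pendant triangle `uᵢvᵢwᵢ` of a block
contained in `S`. Indeed the three sides cut off three regions, each attached only through two
of the sides, and the tree has to leave each region. Two such trees therefore share an edge,
so `κ(S) ≤ 1`, and the path `v₁u₁u₂u₃v₃` shows `κ({u₁, u₂, u₃, v₁, v₃}) = 1`. The pendant
triangles are three closed ears of the cycle `u₁u₂u₃`. -/

instance : DecidableRel counterexampleGraph.Adj := by
  unfold counterexampleGraph; infer_instance

theorem List.Nodup.natCard_setOf_mem {α : Type*} {l : List α} (hl : l.Nodup) :
    Nat.card {x | x ∈ l} = l.length := by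
  classical
  rw [← List.coe_toFinset, Nat.card_coe_set_eq, Set.ncard_coe_finset,
    List.toFinset_card_of_nodup hl]

theorem List.setOf_mem_ne {α : Type*} {l l' : List α} {a : α} (h : a ∈ l) (h' : a ∉ l') :
    {x | x ∈ l} ≠ {x | x ∈ l'} :=
  fun heq => h' ((Set.ext_iff.1 heq a).1 h)

namespace SimpleGraph

variable {V : Type*} {G : SimpleGraph V}

theorem Subgraph.Preconnected.exists_adj_mem_not_mem {H : G.Subgraph} (hH : H.Preconnected)
    {R : Set V} {x y : V} (hx : x ∈ H.verts) (hy : y ∈ H.verts) (hxR : x ∈ R) (hyR : y ∉ R) :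
    ∃ a b, H.Adj a b ∧ a ∈ R ∧ b ∉ R := by
  obtain ⟨p, hp⟩ := H.preconnected_iff_forall_exists_walk_subgraph.mp hH hx hy
  obtain ⟨d, hd, ha, hb⟩ := p.exists_boundary_dart R hxR hyR
  refine ⟨d.fst, d.snd, hp.2 ?_, ha, hb⟩
  rw [← Subgraph.mem_edgeSet, Walk.mem_edges_toSubgraph]
  exact List.mem_map_of_mem hd

/-- The three sides `e i` of a triangle whose removal cuts off three regions `R i`, each of
them attached to the rest of the graph only through the two sides `e j`, `j ≠ i`. -/
def IsTriangleCut (G : SimpleGraph V) (e : Fin 3 → Sym2 V) (R : Fin 3 → Set V) : Prop :=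
  ∀ i a b, G.Adj a b → a ∈ R i → b ∉ R i → ∃ j ≠ i, s(a, b) = e j

namespace IsTriangleCut

variable {e : Fin 3 → Sym2 V} {R : Fin 3 → Set V} {S : Set V}

theorem exists_ne_mem_edgeSet (hcut : G.IsTriangleCut e R)
    (hS : ∀ i, (S ∩ R i).Nonempty ∧ (S \ R i).Nonempty) {H : G.Subgraph} (hH : H.Preconnected)
    (hSH : S ⊆ H.verts) : ∃ j k, j ≠ k ∧ e j ∈ H.edgeSet ∧ e k ∈ H.edgeSet := by
  have hcross : ∀ i, ∃ j ≠ i, e j ∈ H.edgeSet := by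
    intro i
    obtain ⟨⟨x, hxS, hxR⟩, ⟨y, hyS, hyR⟩⟩ := hS i
    obtain ⟨a, b, hab, ha, hb⟩ := hH.exists_adj_mem_not_mem (hSH hxS) (hSH hyS) hxR hyR
    obtain ⟨j, hji, hj⟩ := hcut i a b (H.adj_sub hab) ha hb
    exact ⟨j, hji, hj ▸ hab⟩
  choose σ hσ hmem using hcross
  -- `σ` has no fixed point, so it is not constant
  obtain ⟨i, i', hii'⟩ : ∃ i i', σ i ≠ σ i' := by
    by_contra! hconst
    exact hσ (σ 0) (hconst _ _)
  exact ⟨σ i, σ i', hii', hmem i, hmem i'⟩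

theorem edgeSet_inter_nonempty (hcut : G.IsTriangleCut e R)
    (hS : ∀ i, (S ∩ R i).Nonempty ∧ (S \ R i).Nonempty) {H₁ H₂ : G.Subgraph}
    (hH₁ : H₁.Preconnected) (hH₂ : H₂.Preconnected) (hSH₁ : S ⊆ H₁.verts)
    (hSH₂ : S ⊆ H₂.verts) : (H₁.edgeSet ∩ H₂.edgeSet).Nonempty := by
  obtain ⟨j, k, hjk, hj, hk⟩ := hcut.exists_ne_mem_edgeSet hS hH₁ hSH₁
  obtain ⟨l, m, hlm, hl, hm⟩ := hcut.exists_ne_mem_edgeSet hS hH₂ hSH₂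
  obtain rfl | rfl | rfl | rfl : j = l ∨ j = m ∨ k = l ∨ k = m := by omega
  exacts [⟨_, hj, hl⟩, ⟨_, hj, hm⟩, ⟨_, hk, hl⟩, ⟨_, hk, hm⟩]

end IsTriangleCut

section SteinerConn

variable {S : Set V}

theorem IsSteinerTree.preconnected {T : G.Subgraph} (hT : G.IsSteinerTree S T) :
    T.Preconnected :=
  Subgraph.preconnected_iff.2 hT.2.connected.preconnected

theorem le_one_of_edgeSet_inter_nonempty
    (h : ∀ T₁ T₂, G.IsSteinerTree S T₁ → G.IsSteinerTree S T₂ →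
      (T₁.edgeSet ∩ T₂.edgeSet).Nonempty)
    {n : ℕ} {f : Fin n → G.Subgraph} (hf : ∀ i, G.IsSteinerTree S (f i))
    (hdisj : ∀ i j, i ≠ j → (f i).edgeSet ∩ (f j).edgeSet = ∅) : n ≤ 1 := by
  by_contra! hn
  have hne : (⟨0, by omega⟩ : Fin n) ≠ ⟨1, hn⟩ := by simp
  have hinter := h _ _ (hf ⟨0, by omega⟩) (hf ⟨1, hn⟩)
  rw [hdisj _ _ hne] at hinter
  exact Set.not_nonempty_empty hinter

theorem steinerConn_le_one
    (h : ∀ T₁ T₂, G.IsSteinerTree S T₁ → G.IsSteinerTree S T₂ →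
      (T₁.edgeSet ∩ T₂.edgeSet).Nonempty) :
    G.steinerConn S ≤ 1 :=
  csSup_le ⟨0, Fin.elim0, fun i => i.elim0, fun i => i.elim0⟩ fun _ ⟨_, hf, hdisj⟩ =>
    le_one_of_edgeSet_inter_nonempty h hf fun i j hij => (hdisj i j hij).1

theorem steinerConn_eq_one {T : G.Subgraph} (hT : G.IsSteinerTree S T)
    (h : ∀ T₁ T₂, G.IsSteinerTree S T₁ → G.IsSteinerTree S T₂ →
      (T₁.edgeSet ∩ T₂.edgeSet).Nonempty) :
    G.steinerConn S = 1 :=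
  IsGreatest.csSup_eq
    ⟨⟨fun _ => T, fun _ => hT, fun i j hij => absurd (Subsingleton.elim i j) hij⟩,
      fun _ ⟨_, hf, hdisj⟩ =>
        le_one_of_edgeSet_inter_nonempty h hf fun i j hij => (hdisj i j hij).1⟩

theorem kappaBar_eq {k m : ℕ} (hle : ∀ S : Finset V, S.card = k → G.steinerConn ↑S ≤ m)
    (hS : ∃ S : Finset V, S.card = k ∧ G.steinerConn ↑S = m) : G.kappaBar k = m :=
  IsGreatest.csSup_eq ⟨hS, by rintro _ ⟨S, hS, rfl⟩; exact hle S hS⟩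

end SteinerConn

theorem Walk.IsPath.isTree_toSubgraph {u v : V} {p : G.Walk u v} (hp : p.IsPath) :
    p.toSubgraph.coe.IsTree := by
  have : Finite p.toSubgraph.verts := by
    rw [Walk.verts_toSubgraph]; exact List.finite_toSet _
  have hE : Nat.card p.toSubgraph.coe.edgeSet = Nat.card p.toSubgraph.edgeSet := by
    rw [← Subgraph.image_coe_edgeSet_coe, Nat.card_image_of_injective]
    exact Sym2.map.injective Subtype.val_injective
  have hV : Nat.card p.toSubgraph.verts = p.length + 1 := by
    rw [Walk.verts_toSubgraph, hp.support_nodup.natCard_setOf_mem, Walk.length_support]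
  rw [isTree_iff_connected_and_card, hE, Walk.edgeSet_toSubgraph, Walk.edgeSet,
    hp.isTrail.edges_nodup.natCard_setOf_mem, Walk.length_edges, hV]
  exact ⟨p.toSubgraph_connected, rfl⟩

def Walk.triangle {a b c : V} (hab : G.Adj a b) (hbc : G.Adj b c) (hca : G.Adj c a) :
    G.Walk a a :=
  .cons hab (.cons hbc (.cons hca .nil))

theorem Walk.isCycle_triangle {a b c : V} (hab : G.Adj a b) (hbc : G.Adj b c)
    (hca : G.Adj c a) : (Walk.triangle hab hbc hca).IsCycle := by
  refine (Walk.isCycle_def _).2 ⟨⟨?_⟩, by simp [triangle], ?_⟩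
  · simp [triangle, hab.ne, hbc.ne, hca.ne, hab.ne.symm, hca.ne.symm]
  · simp [triangle, hbc.ne, hca.ne, hab.ne.symm]

end SimpleGraph

open SimpleGraph

def separatingCuts : Fin 4 → (Fin 3 → Sym2 (Fin 9)) × (Fin 3 → Finset (Fin 9)) :=
  ![(![s(1, 2), s(2, 0), s(0, 1)], ![{0, 3, 4}, {1, 5, 6}, {2, 7, 8}]),
    (![s(3, 4), s(4, 0), s(0, 3)], ![{3, 4}ᶜ, {3}, {4}]),
    (![s(5, 6), s(6, 1), s(1, 5)], ![{5, 6}ᶜ, {5}, {6}]),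
    (![s(7, 8), s(8, 2), s(2, 7)], ![{7, 8}ᶜ, {7}, {8}])]

theorem isTriangleCut_separatingCuts (c : Fin 4) :
    counterexampleGraph.IsTriangleCut (separatingCuts c).1 fun i => ↑((separatingCuts c).2 i) := by
  unfold IsTriangleCut
  simp only [Finset.mem_coe]
  revert c
  decide

set_option maxRecDepth 100000 in
theorem exists_separatingCuts (S : Finset (Fin 9)) (hS : S.card = 5) :
    ∃ c, ∀ i, ((S : Set (Fin 9)) ∩ ↑((separatingCuts c).2 i)).Nonempty ∧
      ((S : Set (Fin 9)) \ ↑((separatingCuts c).2 i)).Nonempty := by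
  simp only [← Finset.coe_inter, ← Finset.coe_sdiff, Finset.coe_nonempty]
  revert S
  decide

theorem edgeSet_inter_nonempty_of_card_eq_five {S : Finset (Fin 9)} (hS : S.card = 5)
    (T₁ T₂ : counterexampleGraph.Subgraph) (hT₁ : counterexampleGraph.IsSteinerTree ↑S T₁)
    (hT₂ : counterexampleGraph.IsSteinerTree ↑S T₂) : (T₁.edgeSet ∩ T₂.edgeSet).Nonempty := by
  obtain ⟨c, hc⟩ := exists_separatingCuts S hS
  exact (isTriangleCut_separatingCuts c).edgeSet_inter_nonempty hc hT₁.preconnected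
    hT₂.preconnected hT₁.1 hT₂.1

def steinerPath : counterexampleGraph.Walk 3 7 :=
  .cons (v := 0) (by decide) <| .cons (v := 1) (by decide) <| .cons (v := 2) (by decide) <|
    .cons (by decide) .nil

theorem isSteinerTree_steinerPath :
    counterexampleGraph.IsSteinerTree ↑({0, 1, 2, 3, 7} : Finset (Fin 9)) steinerPath.toSubgraph :=
  ⟨by rw [Walk.verts_toSubgraph, Set.subset_def]; decide,
    ((Walk.isPath_def _).2 (by decide)).isTree_toSubgraph⟩

def centralTriangle : counterexampleGraph.Walk 0 0 :=
  .triangle (b := 1) (c := 2) (by decide) (by decide) (by decide)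

def pendantTriangle₁ : counterexampleGraph.Walk 0 0 :=
  .triangle (b := 3) (c := 4) (by decide) (by decide) (by decide)

def pendantTriangle₂ : counterexampleGraph.Walk 1 1 :=
  .triangle (b := 5) (c := 6) (by decide) (by decide) (by decide)

def pendantTriangle₃ : counterexampleGraph.Walk 2 2 :=
  .triangle (b := 7) (c := 8) (by decide) (by decide) (by decide)

theorem isEar_pendantTriangles :
    counterexampleGraph.IsEar centralTriangle pendantTriangle₁ ∧
      counterexampleGraph.IsEar centralTriangle pendantTriangle₂ ∧
      counterexampleGraph.IsEar centralTriangle pendantTriangle₃ := by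
  unfold IsEar
  refine ⟨?_, ?_, ?_⟩ <;> decide

/-- For the graph above, `κ̄₅(G) = 1`, even though `G` contains a cycle
(namely the one on `{u₁, u₂, u₃} = {0, 1, 2}`) having three (pairwise distinct) ears. -/
theorem stmt_18 :
    counterexampleGraph.kappaBar 5 = 1 ∧
    ∃ (x : Fin 9) (c : counterexampleGraph.Walk x x), c.IsCycle ∧
      {v | v ∈ c.support} = ({0, 1, 2} : Set (Fin 9)) ∧
      ∃ (u₁ v₁ u₂ v₂ u₃ v₃ : Fin 9)
        (p₁ : counterexampleGraph.Walk u₁ v₁) (p₂ : counterexampleGraph.Walk u₂ v₂)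
        (p₃ : counterexampleGraph.Walk u₃ v₃),
        counterexampleGraph.IsEar c p₁ ∧ counterexampleGraph.IsEar c p₂ ∧
        counterexampleGraph.IsEar c p₃ ∧
        {e | e ∈ p₁.edges} ≠ {e | e ∈ p₂.edges} ∧
        {e | e ∈ p₁.edges} ≠ {e | e ∈ p₃.edges} ∧
        {e | e ∈ p₂.edges} ≠ {e | e ∈ p₃.edges} := by
  have hκ : counterexampleGraph.kappaBar 5 = 1 :=
    kappaBar_eq (fun S hS => steinerConn_le_one (edgeSet_inter_nonempty_of_card_eq_five hS))
      ⟨_, rfl, steinerConn_eq_one isSteinerTree_steinerPath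
        (edgeSet_inter_nonempty_of_card_eq_five rfl)⟩
  have hsupport : {v | v ∈ centralTriangle.support} = ({0, 1, 2} : Set (Fin 9)) := by
    ext v
    simp [centralTriangle, Walk.triangle]
    tauto
  obtain ⟨hear₁, hear₂, hear₃⟩ := isEar_pendantTriangles
  exact ⟨hκ, 0, centralTriangle, Walk.isCycle_triangle _ _ _, hsupport, 0, 0, 1, 1, 2, 2,
    pendantTriangle₁, pendantTriangle₂, pendantTriangle₃, hear₁, hear₂, hear₃,
    List.setOf_mem_ne (a := s(0, 3)) (by decide) (by decide),
    List.setOf_mem_ne (a := s(0, 3)) (by decide) (by decide),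
    List.setOf_mem_ne (a := s(1, 5)) (by decide) (by decide)⟩
end
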